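/- In a tame positive integral SL_2-tiling, the ratio (u_{i-1,j} + u_{i+1,j}) / u_{i,j} is a positive integer independent of j, and the ratio (u_{i,j-1} + u_{i,j+1}) / u_{i,j} is a positive integer independent of i. -/

import Mathlib

/-!
Since every adjacent 2×2 minor of an SL₂-tiling equals 1, subtracting the minors of rows
`i - 1, i` and `i, i + 1` at columns `j, j + 1` shows that the column vectors `(s j, u i j)`,
with `s j := u (i - 1) j + u (i + 1) j`, are pairwise proportional, so `s j / u i j` does not
depend on `j`. The ratio is an integer because `u i 0` divides `s 0 * u i 1` and is coprime to
`u i 1` (their Bézout relation is the minor itself). Columns follow by transposing.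
-/

def IsSL2Tiling (u : ℤ → ℤ → ℤ) : Prop :=
  ∀ i j : ℤ, u i j * u (i + 1) (j + 1) - u i (j + 1) * u (i + 1) j = 1

theorem eq_const_mul_of_mul_succ_eq {R : Type*} [CommMonoidWithZero R] [IsCancelMulZero R]
    {f g : ℤ → R} {a : R} (hg : ∀ j, g j ≠ 0)
    (hcross : ∀ j, f j * g (j + 1) = f (j + 1) * g j) (h0 : f 0 = a * g 0) (j : ℤ) :
    f j = a * g j := by
  induction j using Int.induction_on with
  | zero => exact h0
  | succ n ih =>
    refine mul_right_cancel₀ (hg n) ?_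
    rw [← hcross, ih, mul_right_comm]
  | pred n ih =>
    have hstep := hcross (-n - 1)
    rw [sub_add_cancel, ih] at hstep
    refine mul_right_cancel₀ (hg (-n)) ?_
    rw [hstep, mul_right_comm]

namespace IsSL2Tiling

variable {u : ℤ → ℤ → ℤ}

theorem transpose (hu : IsSL2Tiling u) : IsSL2Tiling fun i j => u j i := fun i j => by
  linear_combination hu j i

theorem isCoprime (hu : IsSL2Tiling u) (i j : ℤ) : IsCoprime (u i j) (u i (j + 1)) :=
  ⟨u (i + 1) (j + 1), -u (i + 1) j, by linear_combination hu i j⟩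

theorem neighbour_sum_mul_succ_eq (hu : IsSL2Tiling u) (i j : ℤ) :
    (u (i - 1) j + u (i + 1) j) * u i (j + 1)
      = (u (i - 1) (j + 1) + u (i + 1) (j + 1)) * u i j := by
  have hprev := hu (i - 1) j
  rw [sub_add_cancel] at hprev
  linear_combination hprev - hu i j

theorem exists_neighbour_sum_eq_mul (hu : IsSL2Tiling u) (hpos : ∀ i j, 0 < u i j) (i : ℤ) :
    ∃ a : ℤ, 0 < a ∧ ∀ j : ℤ, u (i - 1) j + u (i + 1) j = a * u i j := by
  have hdvd : u i 0 ∣ u (i - 1) 0 + u (i + 1) 0 :=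
    (hu.isCoprime i 0).dvd_of_dvd_mul_right
      ⟨u (i - 1) 1 + u (i + 1) 1, by simpa [mul_comm] using hu.neighbour_sum_mul_succ_eq i 0⟩
  obtain ⟨a, ha⟩ := hdvd
  have hsum_pos : 0 < u i 0 * a := ha ▸ add_pos (hpos (i - 1) 0) (hpos (i + 1) 0)
  refine ⟨a, pos_of_mul_pos_right hsum_pos (hpos i 0).le, ?_⟩
  exact eq_const_mul_of_mul_succ_eq (fun j => (hpos i j).ne') (hu.neighbour_sum_mul_succ_eq i)
    (by rw [ha, mul_comm])

end IsSL2Tiling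

theorem sl2_tiling_ratios_general (u : ℤ → ℤ → ℤ)
    (hpos : ∀ i j : ℤ, 0 < u i j)
    (hsl2 : ∀ i j : ℤ, u i j * u (i + 1) (j + 1) - u i (j + 1) * u (i + 1) j = 1) :
    (∀ i : ℤ, ∃ a : ℤ, 0 < a ∧ ∀ j : ℤ, u (i - 1) j + u (i + 1) j = a * u i j) ∧
    (∀ j : ℤ, ∃ b : ℤ, 0 < b ∧ ∀ i : ℤ, u i (j - 1) + u i (j + 1) = b * u i j) := by
  have hu : IsSL2Tiling u := hsl2
  exact ⟨hu.exists_neighbour_sum_eq_mul hpos,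
    hu.transpose.exists_neighbour_sum_eq_mul fun i j => hpos j i⟩

/-- In a tame positive integral SL₂-tiling, the ratio (u_{i-1,j}+u_{i+1,j})/u_{i,j}
is a positive integer independent of j, and (u_{i,j-1}+u_{i,j+1})/u_{i,j} is a
positive integer independent of i. -/
theorem sl2_tiling_ratios (u : ℤ → ℤ → ℤ)
    (hpos : ∀ i j : ℤ, 0 < u i j)
    (hsl2 : ∀ i j : ℤ, u i j * u (i + 1) (j + 1) - u i (j + 1) * u (i + 1) j = 1)
    (htame : ∀ i j : ℤ,
      u i j * (u (i + 1) (j + 1) * u (i + 2) (j + 2) - u (i + 1) (j + 2) * u (i + 2) (j + 1))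
        - u i (j + 1) * (u (i + 1) j * u (i + 2) (j + 2) - u (i + 1) (j + 2) * u (i + 2) j)
        + u i (j + 2) * (u (i + 1) j * u (i + 2) (j + 1) - u (i + 1) (j + 1) * u (i + 2) j)
      = 0) :
    (∀ i : ℤ, ∃ a : ℤ, 0 < a ∧ ∀ j : ℤ, u (i - 1) j + u (i + 1) j = a * u i j) ∧
    (∀ j : ℤ, ∃ b : ℤ, 0 < b ∧ ∀ i : ℤ, u i (j - 1) + u i (j + 1) = b * u i j) :=
  sl2_tiling_ratios_general u hpos hsl2
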